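/- arXiv:1011.5470 — 2 statements merged into one kernel-verified Lean document; each statement's English description precedes it below -/
import Mathlib

section
/- Let G be a connected finite graph and let D be a dominating set of G. Then D can be extended to a connected dominating set D' with D ⊆ D' and |D'| ≤ 3|D| - 2. In particular, the minimum connected dominating set has size less than 3 times the minimum dominating set size. -/
/-- `D` is a dominating set of `G`: every vertex is in `D` or adjacent to a vertex of `D`. -/
def IsDominatingSet {V : Type*} (G : SimpleGraph V) (D : Finset V) : Prop :=
  ∀ v : V, v ∈ D ∨ ∃ u ∈ D, G.Adj u v

open SimpleGraph

private lemma walk_reachable_induce {V : Type*} {G : SimpleGraph V} {S : Set V} {u v : V}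
    (p : G.Walk u v) (hp : ∀ w ∈ p.support, w ∈ S) (hu : u ∈ S) (hv : v ∈ S) :
    (G.induce S).Reachable ⟨u, hu⟩ ⟨v, hv⟩ := by
  induction p with
  | nil => rfl
  | @cons a b c h q ih =>
      have hb : b ∈ S := hp b (by simp)
      have h1 : (G.induce S).Adj ⟨a, hu⟩ ⟨b, hb⟩ := h
      exact h1.reachable.trans (ih (fun w hw => hp w (by simp [hw])) hb hv)

/-- Key step: if the induced graph on `S ⊇ D` is not preconnected, we can add at most two
vertices to merge two components. -/
private lemma key_step {V : Type*} [Fintype V] [DecidableEq V] {G : SimpleGraph V}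
    (hG : G.Connected) (D S : Finset V) (hD : IsDominatingSet G D) (hDS : D ⊆ S)
    (hnpc : ¬ (G.induce (S : Set V)).Preconnected) :
    ∃ S' : Finset V, S ⊆ S' ∧ S'.card ≤ S.card + 2 ∧
      (∀ z : ↥(S' : Set V), ∃ w : ↥(S' : Set V), (w : V) ∈ S ∧
        (G.induce (S' : Set V)).Reachable z w) ∧
      ∃ (u v : V) (hu : u ∈ S) (hv : v ∈ S),
        ¬ (G.induce (S : Set V)).Reachable ⟨u, hu⟩ ⟨v, hv⟩ ∧
        ∀ (hu' : u ∈ (S' : Set V)) (hv' : v ∈ (S' : Set V)),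
          (G.induce (S' : Set V)).Reachable ⟨u, hu'⟩ ⟨v, hv'⟩ := by
  classical
  rw [SimpleGraph.Preconnected] at hnpc
  push_neg at hnpc
  obtain ⟨x, y, hxy⟩ := hnpc
  -- minimal-length counterexample walk
  set P : ℕ → Prop := fun n => ∃ (u v : ↥(S : Set V)),
    ¬ (G.induce (S : Set V)).Reachable u v ∧ ∃ p : G.Walk u v, p.length = n with hP
  have hex : ∃ n, P n := by
    obtain ⟨p⟩ := hG.preconnected (x : V) (y : V)
    exact ⟨p.length, x, y, hxy, p, rfl⟩
  have hdec : DecidablePred P := fun n => Classical.dec _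
  obtain ⟨⟨u, hu⟩, ⟨v, hv⟩, huv, p, hlen⟩ := Nat.find_spec hex
  simp only at p hlen
  have hmin : ∀ m, m < Nat.find hex → ¬ P m := fun m hm => Nat.find_min hex hm
  -- helper to finish with a chosen S'
  have finish : ∀ (a b : V), a ∈ (insert a (insert b S) : Finset V) → True := by intro _ _ _; trivial
  clear finish
  -- analyze the walk
  cases p with
  | nil => exact absurd (SimpleGraph.Reachable.refl _) huv
  | @cons _ a _ h1 q =>
    cases q with
    | nil =>
      exact absurd (SimpleGraph.Adj.reachable (show (G.induce (S : Set V)).Adj ⟨u, hu⟩ ⟨v, hv⟩ from h1)) huv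
    | @cons _ b _ h2 q =>
      cases q with
      | nil =>
        -- length 2: u - a - v ; add a
        refine ⟨insert a S, Finset.subset_insert _ _, (Finset.card_insert_le _ _).trans (by omega), ?_, u, v, hu, hv, ?_, ?_⟩
        · rintro ⟨z, hz⟩
          simp only [Finset.coe_insert, Set.mem_insert_iff, Finset.mem_coe] at hz
          rcases hz with rfl | hz
          · refine ⟨⟨u, by simp [hu]⟩, hu, ?_⟩
            exact (SimpleGraph.Adj.reachable (show (G.induce _).Adj _ _ from h1.symm))
          · exact ⟨⟨z, by simp [hz]⟩, hz, SimpleGraph.Reachable.refl _⟩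
        · simpa using huv
        · intro hu' hv'
          have ha : a ∈ ((insert a S : Finset V) : Set V) := by simp
          exact (SimpleGraph.Adj.reachable (show (G.induce _).Adj ⟨u, hu'⟩ ⟨a, ha⟩ from h1)).trans
            (SimpleGraph.Adj.reachable (show (G.induce _).Adj ⟨a, ha⟩ ⟨v, hv'⟩ from h2))
      | @cons _ c _ h3 q =>
        cases q with
        | nil =>
          -- length 3: u - a - b - v ; add a, b
          refine ⟨insert a (insert b S), (Finset.subset_insert _ _).trans (Finset.subset_insert _ _) |>.trans (by rfl), ?_, ?_, u, v, hu, hv, ?_, ?_⟩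
          · exact le_trans (Finset.card_insert_le _ _) (by simpa using Nat.add_le_add_right (Finset.card_insert_le _ _) 1)
          · rintro ⟨z, hz⟩
            have hb : b ∈ ((insert a (insert b S) : Finset V) : Set V) := by simp
            have ha : a ∈ ((insert a (insert b S) : Finset V) : Set V) := by simp
            have hvm : v ∈ ((insert a (insert b S) : Finset V) : Set V) := by simp [hv]
            simp only [Finset.coe_insert, Set.mem_insert_iff, Finset.mem_coe] at hz
            have hrb : (G.induce ((insert a (insert b S) : Finset V) : Set V)).Reachable ⟨b, hb⟩ ⟨v, hvm⟩ :=
              SimpleGraph.Adj.reachable (show (G.induce _).Adj _ _ from h3)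
            rcases hz with rfl | rfl | hz
            · exact ⟨⟨v, hvm⟩, hv, (SimpleGraph.Adj.reachable
                (show (G.induce _).Adj ⟨z, _⟩ ⟨b, hb⟩ from h2)).trans hrb⟩
            · exact ⟨⟨v, hvm⟩, hv, hrb⟩
            · exact ⟨⟨z, by simp [hz]⟩, hz, SimpleGraph.Reachable.refl _⟩
          · simpa using huv
          · intro hu' hv'
            have hb : b ∈ ((insert a (insert b S) : Finset V) : Set V) := by simp
            have ha : a ∈ ((insert a (insert b S) : Finset V) : Set V) := by simp
            exact (SimpleGraph.Adj.reachable (show (G.induce _).Adj ⟨u, hu'⟩ ⟨a, ha⟩ from h1)).trans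
              ((SimpleGraph.Adj.reachable (show (G.induce _).Adj ⟨a, ha⟩ ⟨b, hb⟩ from h2)).trans
               (SimpleGraph.Adj.reachable (show (G.induce _).Adj ⟨b, hb⟩ ⟨v, hv'⟩ from h3)))
        | @cons _ d _ h4 q =>
          -- length ≥ 4 : contradiction with minimality
          exfalso
          have hn : Nat.find hex = q.length + 4 := by simp at hlen; omega
          by_cases hbS : b ∈ S
          · by_cases hr : (G.induce (S : Set V)).Reachable ⟨u, hu⟩ ⟨b, hbS⟩
            · have hnr : ¬ (G.induce (S : Set V)).Reachable ⟨b, hbS⟩ ⟨v, hv⟩ :=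
                fun h => huv (hr.trans h)
              exact hmin (q.length + 2) (by omega)
                ⟨⟨b, hbS⟩, ⟨v, hv⟩, hnr, Walk.cons h3 (Walk.cons h4 q), by simp⟩
            · exact hmin 2 (by omega)
                ⟨⟨u, hu⟩, ⟨b, hbS⟩, hr, Walk.cons h1 (Walk.cons h2 Walk.nil), by simp⟩
          · rcases hD b with hbD | ⟨e, heD, heb⟩
            · exact hbS (hDS hbD)
            · have heS : e ∈ S := hDS heD
              by_cases hr : (G.induce (S : Set V)).Reachable ⟨u, hu⟩ ⟨e, heS⟩
              · have hnr : ¬ (G.induce (S : Set V)).Reachable ⟨e, heS⟩ ⟨v, hv⟩ :=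
                  fun h => huv (hr.trans h)
                exact hmin (q.length + 3) (by omega)
                  ⟨⟨e, heS⟩, ⟨v, hv⟩, hnr, Walk.cons heb (Walk.cons h3 (Walk.cons h4 q)), by simp⟩
              · exact hmin 3 (by omega)
                  ⟨⟨u, hu⟩, ⟨e, heS⟩, hr, Walk.cons h1 (Walk.cons h2 (Walk.cons heb.symm Walk.nil)), by simp⟩

private lemma main_ind {V : Type*} [Fintype V] [DecidableEq V] {G : SimpleGraph V}
    (hG : G.Connected) (D : Finset V) (hD : IsDominatingSet G D) (hDne : D.Nonempty) :
    ∀ n (S : Finset V), D ⊆ S →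
      Nat.card (G.induce (S : Set V)).ConnectedComponent ≤ n →
      ∃ D' : Finset V, D ⊆ D' ∧ (G.induce (D' : Set V)).Connected ∧
        D'.card ≤ S.card + 2 * (n - 1) := by
  classical
  intro n
  induction n with
  | zero =>
    intro S hDS hcard
    exfalso
    obtain ⟨d, hd⟩ := hDne
    have : Nonempty (G.induce (S : Set V)).ConnectedComponent :=
      ⟨(G.induce (S : Set V)).connectedComponentMk ⟨d, by simp [hDS hd]⟩⟩
    have := Nat.card_pos (α := (G.induce (S : Set V)).ConnectedComponent)
    omega
  | succ n ih =>
    intro S hDS hcard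
    by_cases hpc : (G.induce (S : Set V)).Preconnected
    · obtain ⟨d, hd⟩ := hDne
      have hne : Nonempty ↥(S : Set V) := ⟨⟨d, by simp [hDS hd]⟩⟩
      exact ⟨S, hDS, SimpleGraph.Connected.mk hpc, by omega⟩
    · obtain ⟨S', hSS', hcard', hreach, u, v, hu, hv, hnr, hr⟩ :=
        key_step hG D S hD hDS hpc
      have hle : (S : Set V) ≤ (S' : Set V) := Finset.coe_subset.mpr hSS'
      set f : (G.induce (S : Set V)).ConnectedComponent →
          (G.induce (S' : Set V)).ConnectedComponent :=
        SimpleGraph.ConnectedComponent.map (G.induceHomOfLE hle).toHom with hf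
      have hsurj : Function.Surjective f := by
        intro c
        induction c using SimpleGraph.ConnectedComponent.ind with
        | _ z =>
          obtain ⟨w, hwS, hzw⟩ := hreach z
          refine ⟨(G.induce (S : Set V)).connectedComponentMk ⟨(w : V), hwS⟩, ?_⟩
          rw [hf, SimpleGraph.ConnectedComponent.map_mk]
          refine SimpleGraph.ConnectedComponent.eq.mpr ?_
          have : ((G.induceHomOfLE hle).toHom ⟨(w : V), hwS⟩ : ↥(S' : Set V)) = w := by
            ext; rfl
          rw [this]
          exact hzw.symm
      have hninj : ¬ Function.Injective f := by
        intro hinj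
        apply hnr
        have h1 : f ((G.induce (S : Set V)).connectedComponentMk ⟨u, hu⟩) =
            f ((G.induce (S : Set V)).connectedComponentMk ⟨v, hv⟩) := by
          rw [hf, SimpleGraph.ConnectedComponent.map_mk, SimpleGraph.ConnectedComponent.map_mk]
          exact SimpleGraph.ConnectedComponent.eq.mpr (hr _ _)
        exact SimpleGraph.ConnectedComponent.eq.mp (hinj h1)
      have hlt : Nat.card (G.induce (S' : Set V)).ConnectedComponent <
          Nat.card (G.induce (S : Set V)).ConnectedComponent := by
        have i1 : Fintype (G.induce (S : Set V)).ConnectedComponent := Fintype.ofFinite _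
        have i2 : Fintype (G.induce (S' : Set V)).ConnectedComponent := Fintype.ofFinite _
        rw [Nat.card_eq_fintype_card, Nat.card_eq_fintype_card]
        exact Fintype.card_lt_of_surjective_not_injective f hsurj hninj
      have hpos : 0 < Nat.card (G.induce (S' : Set V)).ConnectedComponent := by
        obtain ⟨d, hd⟩ := hDne
        have : Nonempty (G.induce (S' : Set V)).ConnectedComponent :=
          ⟨(G.induce (S' : Set V)).connectedComponentMk ⟨d, hSS' (hDS hd)⟩⟩
        exact Nat.card_pos
      obtain ⟨D', h1, h2, h3⟩ := ih S' (hDS.trans hSS') (by omega)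
      exact ⟨D', h1, h2, by omega⟩

theorem dominatingSet_extends_to_connected
    {V : Type*} [Fintype V] [DecidableEq V] (G : SimpleGraph V)
    (hG : G.Connected) (D : Finset V) (hD : IsDominatingSet G D) :
    ∃ D' : Finset V, D ⊆ D' ∧ IsDominatingSet G D' ∧
      (G.induce (D' : Set V)).Connected ∧ D'.card ≤ 3 * D.card - 2 := by
  classical
  have hVne : Nonempty V := hG.nonempty
  have hDne : D.Nonempty := by
    obtain ⟨v⟩ := hVne
    rcases hD v with h | ⟨u, hu, _⟩
    exacts [⟨v, h⟩, ⟨u, hu⟩]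
  set c := Nat.card (G.induce (D : Set V)).ConnectedComponent with hc
  have hcle : c ≤ D.card := by
    have h1 : Nat.card (G.induce (D : Set V)).ConnectedComponent ≤
        Nat.card ↥(D : Set V) :=
      Nat.card_le_card_of_surjective _ (fun c => SimpleGraph.ConnectedComponent.ind (fun v => ⟨v, rfl⟩) c)
    rwa [Nat.card_coe_set_eq, Set.ncard_coe_finset] at h1
  have hcpos : 0 < c := by
    obtain ⟨d, hd⟩ := hDne
    have : Nonempty (G.induce (D : Set V)).ConnectedComponent :=
      ⟨(G.induce (D : Set V)).connectedComponentMk ⟨d, by simp [hd]⟩⟩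
    exact Nat.card_pos
  have hD1 : 1 ≤ D.card := Finset.card_pos.mpr hDne
  obtain ⟨D', h1, h2, h3⟩ := main_ind hG D hD hDne c D (subset_refl _) le_rfl
  refine ⟨D', h1, ?_, h2, by omega⟩
  intro v
  rcases hD v with h | ⟨u, hu, huv⟩
  exacts [Or.inl (h1 h), Or.inr ⟨u, h1 hu, huv⟩]
end

section
/- For the complete bipartite graph K_{m,√m} (with m a perfect square), the minimum vertex cover has size exactly √m, while the set of all vertices has size m + √m; hence taking all vertices gives approximation ratio √m + 1 = Δ^{1/2} + 1 where Δ = m is the maximum degree. -/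
/-- `S` is a vertex cover of `G`. -/
def IsVertexCover {V : Type*} (G : SimpleGraph V) (S : Finset V) : Prop :=
  ∀ e ∈ G.edgeSet, ∃ v ∈ S, v ∈ e

/-- In the complete bipartite graph `K_{m,√m}` with `m = s²`, the minimum vertex cover
has size exactly `s = √m`, while the set of all vertices has size `m + √m`. -/
theorem completeBipartite_vertexCover
    (s : ℕ) (hs : 1 ≤ s) :
    (∃ C : Finset ((Fin (s * s)) ⊕ (Fin s)),
        IsVertexCover (completeBipartiteGraph (Fin (s * s)) (Fin s)) C ∧ C.card = s) ∧
    (∀ C : Finset ((Fin (s * s)) ⊕ (Fin s)),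
        IsVertexCover (completeBipartiteGraph (Fin (s * s)) (Fin s)) C → s ≤ C.card) ∧
    Fintype.card ((Fin (s * s)) ⊕ (Fin s)) = s * s + s := by
  refine ⟨⟨(Finset.univ : Finset (Fin s)).image Sum.inr, ?_, ?_⟩, ?_, by simp⟩
  · intro e he
    induction e using Sym2.ind with
    | _ x y =>
      rw [SimpleGraph.mem_edgeSet] at he
      simp only [completeBipartiteGraph_adj] at he
      rcases he with ⟨hx, hy⟩ | ⟨hx, hy⟩
      · obtain ⟨b, rfl⟩ := Sum.isRight_iff.mp hy
        exact ⟨Sum.inr b, by simp, by simp⟩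
      · obtain ⟨b, rfl⟩ := Sum.isRight_iff.mp hx
        exact ⟨Sum.inr b, by simp, by simp⟩
  · rw [Finset.card_image_of_injective _ Sum.inr_injective, Finset.card_univ, Fintype.card_fin]
  · intro C hC
    by_cases h : ∀ b : Fin s, Sum.inr b ∈ C
    · calc s = ((Finset.univ : Finset (Fin s)).image Sum.inr).card := by
            rw [Finset.card_image_of_injective _ Sum.inr_injective, Finset.card_univ,
              Fintype.card_fin]
        _ ≤ C.card := Finset.card_le_card (by
            intro x hx
            simp only [Finset.mem_image] at hx
            obtain ⟨b, _, rfl⟩ := hx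
            exact h b)
    · push_neg at h
      obtain ⟨b, hb⟩ := h
      have hall : ∀ a : Fin (s * s), Sum.inl a ∈ C := by
        intro a
        have he : s(Sum.inl a, Sum.inr b) ∈
            (completeBipartiteGraph (Fin (s * s)) (Fin s)).edgeSet := by
          rw [SimpleGraph.mem_edgeSet]; simp
        obtain ⟨v, hv, hmem⟩ := hC _ he
        rcases Sym2.mem_iff.mp hmem with rfl | rfl
        · exact hv
        · exact absurd hv hb
      calc s ≤ s * s := Nat.le_mul_of_pos_left s hs
        _ = ((Finset.univ : Finset (Fin (s * s))).image Sum.inl).card := by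
            rw [Finset.card_image_of_injective _ Sum.inl_injective, Finset.card_univ,
              Fintype.card_fin]
        _ ≤ C.card := Finset.card_le_card (by
            intro x hx
            simp only [Finset.mem_image] at hx
            obtain ⟨a, _, rfl⟩ := hx
            exact hall a)
end
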